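/- Let S = R ∪ B be a finite bicolored point set in general position in the plane, let r ∈ R be a red point, and let b and b' be two blue points consecutive in the radial order around r, with the open wedge W(r,b,b') spanning an angle less than π. If the open triangle with vertices r, b, b' contains at least one and at most two red points, then S has a balanced 4-hole having the segment rb as an edge. -/

import Mathlib

noncomputable section

/-- A set of points in the plane (modeled as `ℂ`) is in general position if
no three of its (distinct) points are collinear. -/
def GenPos (S : Set ℂ) : Prop :=
  ∀ p ∈ S, ∀ q ∈ S, ∀ r ∈ S, p ≠ q → p ≠ r → q ≠ r → ¬ Collinear ℝ ({p, q, r} : Set ℂ)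

/-- The boundary of a quadrilateral with vertices `a, b, c, d` in cyclic order. -/
def QuadBdry (a b c d : ℂ) : Set ℂ :=
  segment ℝ a b ∪ segment ℝ b c ∪ segment ℝ c d ∪ segment ℝ d a

/-- The quadrilateral with vertices `a, b, c, d` in cyclic order is simple:
vertices are pairwise distinct, consecutive edges meet exactly at their common
vertex, and opposite edges are disjoint. -/
def IsSimpleQuad (a b c d : ℂ) : Prop :=
  List.Pairwise (· ≠ ·) [a, b, c, d] ∧
  segment ℝ a b ∩ segment ℝ b c = {b} ∧
  segment ℝ b c ∩ segment ℝ c d = {c} ∧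
  segment ℝ c d ∩ segment ℝ d a = {d} ∧
  segment ℝ d a ∩ segment ℝ a b = {a} ∧
  segment ℝ a b ∩ segment ℝ c d = ∅ ∧
  segment ℝ b c ∩ segment ℝ d a = ∅

/-- The interior of a simple quadrilateral: the union of the bounded connected
components of the complement of its boundary. -/
def QuadInterior (a b c d : ℂ) : Set ℂ :=
  {x | x ∉ QuadBdry a b c d ∧
    Bornology.IsBounded (connectedComponentIn (QuadBdry a b c d)ᶜ x)}

/-- The (not necessarily convex) quadrilateral with vertices `a, b, c, d`
in cyclic order is a balanced 4-hole of the bicolored set `R ∪ B`: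
it is simple, its vertices belong to `R ∪ B` with exactly two of them red and
two blue, and its open interior contains no point of `R ∪ B`. -/
def IsBalanced4Hole (R B : Finset ℂ) (a b c d : ℂ) : Prop :=
  IsSimpleQuad a b c d ∧
  ({a, b, c, d} : Set ℂ) ⊆ (↑R ∪ ↑B : Set ℂ) ∧
  (({a, b, c, d} : Set ℂ) ∩ ↑R).ncard = 2 ∧
  (({a, b, c, d} : Set ℂ) ∩ ↑B).ncard = 2 ∧
  ∀ x ∈ (↑R ∪ ↑B : Set ℂ), x ∉ QuadInterior a b c d

/-- The set of boundaries of balanced 4-holes of `R ∪ B`; two balanced 4-holes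
are distinct iff they have distinct boundaries (so this set counts them). -/
def balanced4HoleBdries (R B : Finset ℂ) : Set (Set ℂ) :=
  {Q | ∃ a b c d : ℂ, IsBalanced4Hole R B a b c d ∧ Q = QuadBdry a b c d}

/-- `p q` is an edge of the convex hull of `S`: both endpoints belong to `S`
and some nonzero linear functional is maximized on `S` exactly along it. -/
def IsHullEdge (S : Set ℂ) (p q : ℂ) : Prop :=
  p ∈ S ∧ q ∈ S ∧ p ≠ q ∧
  ∃ f : ℂ →ₗ[ℝ] ℝ, f ≠ 0 ∧ f p = f q ∧ ∀ s ∈ S, f s ≤ f p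

/-- The counter-clockwise angle (in `(0, 2π]`) from the ray `p → q` to the ray
`p → x`. -/
def ccwAngle (p q x : ℂ) : ℝ :=
  if Complex.arg ((x - p) / (q - p)) ≤ 0 then
    Complex.arg ((x - p) / (q - p)) + 2 * Real.pi
  else Complex.arg ((x - p) / (q - p))

/-- `t` is the first point of `S` reached when rotating the ray `p → q`
counter-clockwise around `p`. -/
def IsFirstCCW (S : Set ℂ) (p q t : ℂ) : Prop :=
  t ∈ S ∧ t ≠ p ∧ t ≠ q ∧
  ∀ s ∈ S, s ≠ p → s ≠ q → s ≠ t → ccwAngle p q t < ccwAngle p q s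

/-- `t` is the first point of `S` reached when rotating the ray `p → q`
clockwise around `p`. -/
def IsFirstCW (S : Set ℂ) (p q t : ℂ) : Prop :=
  t ∈ S ∧ t ≠ p ∧ t ≠ q ∧
  ∀ s ∈ S, s ≠ p → s ≠ q → s ≠ t → ccwAngle p q s < ccwAngle p q t

/-- `t ∈ T(p,q)`: `t` is one of the (at most four) first points of `S = R ∪ B`
reached by the four rotations of the rays `p → q` around `p` and `q → p`
around `q`, clockwise and counter-clockwise. -/
def InT (R B : Finset ℂ) (p q t : ℂ) : Prop :=
  IsFirstCCW (↑R ∪ ↑B : Set ℂ) p q t ∨ IsFirstCW (↑R ∪ ↑B : Set ℂ) p q t ∨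
  IsFirstCCW (↑R ∪ ↑B : Set ℂ) q p t ∨ IsFirstCW (↑R ∪ ↑B : Set ℂ) q p t

/-- The bichromatic segment `p q` (`p` red, `q` blue) is green: it is an edge
or a diagonal of some balanced 4-hole, i.e. both `p` and `q` are vertices of
some balanced 4-hole. -/
def IsGreenEdge (R B : Finset ℂ) (p q : ℂ) : Prop :=
  p ∈ R ∧ q ∈ B ∧
  ∃ a b c d : ℂ, IsBalanced4Hole R B a b c d ∧
    p ∈ ({a, b, c, d} : Set ℂ) ∧ q ∈ ({a, b, c, d} : Set ℂ)

/-- The bichromatic segment `p q` is black: it is not green and is an edge of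
the convex hull of `R ∪ B`. -/
def IsBlackEdge (R B : Finset ℂ) (p q : ℂ) : Prop :=
  p ∈ R ∧ q ∈ B ∧ ¬ IsGreenEdge R B p q ∧ IsHullEdge (↑R ∪ ↑B : Set ℂ) p q

/-- The bichromatic segment `p q` is red: it is neither green nor black and all
points of `T(p,q)` are red. -/
def IsRedEdge (R B : Finset ℂ) (p q : ℂ) : Prop :=
  p ∈ R ∧ q ∈ B ∧ ¬ IsGreenEdge R B p q ∧ ¬ IsHullEdge (↑R ∪ ↑B : Set ℂ) p q ∧
  ∀ t : ℂ, InT R B p q t → t ∈ R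

/-- The bichromatic segment `p q` is blue: it is neither green nor black and
all points of `T(p,q)` are blue. -/
def IsBlueEdge (R B : Finset ℂ) (p q : ℂ) : Prop :=
  p ∈ R ∧ q ∈ B ∧ ¬ IsGreenEdge R B p q ∧ ¬ IsHullEdge (↑R ∪ ↑B : Set ℂ) p q ∧
  ∀ t : ℂ, InT R B p q t → t ∈ B

/-- `R` and `B` are linearly separable: some line has all of `R` strictly on
one side and all of `B` strictly on the other side. -/
def LinSep (R B : Finset ℂ) : Prop :=
  ∃ (f : ℂ →ₗ[ℝ] ℝ) (c : ℝ), (∀ x ∈ R, f x < c) ∧ (∀ x ∈ B, c < f x)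

/-- A finite point set is in (strictly) convex position. -/
def ConvexPos (P : Set ℂ) : Prop :=
  ∀ x ∈ P, x ∉ convexHull ℝ (P \ {x})

/-- `{a, b, c, d}` is the vertex set of a balanced convex 4-hole of `R ∪ B`:
four pairwise distinct points in convex position, all in `R ∪ B`, exactly two
red and two blue, whose open interior (the interior of their convex hull)
contains no point of `R ∪ B`. -/
def IsBalancedConvex4Hole (R B : Finset ℂ) (a b c d : ℂ) : Prop :=
  List.Pairwise (· ≠ ·) [a, b, c, d] ∧
  ConvexPos ({a, b, c, d} : Set ℂ) ∧
  ({a, b, c, d} : Set ℂ) ⊆ (↑R ∪ ↑B : Set ℂ) ∧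
  (({a, b, c, d} : Set ℂ) ∩ ↑R).ncard = 2 ∧
  (({a, b, c, d} : Set ℂ) ∩ ↑B).ncard = 2 ∧
  ∀ x ∈ (↑R ∪ ↑B : Set ℂ), x ∉ interior (convexHull ℝ ({a, b, c, d} : Set ℂ))

/-- The open wedge `W(a,b,c)`: the open convex region bounded by the rays
`a → b` and `a → c`. -/
def wedge (a b c : ℂ) : Set ℂ :=
  {x | ∃ s t : ℝ, 0 < s ∧ 0 < t ∧ x = a + s • (b - a) + t • (c - a)}

/-- The open triangle `Δ a b c`. -/
def openTriangle (a b c : ℂ) : Set ℂ :=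
  interior (convexHull ℝ ({a, b, c} : Set ℂ))

/-- The edge `u v` of `CH(R)` and the edge `w z` of `CH(B)` see each other:
the union of their vertex sets is the vertex set of a balanced convex 4-hole
whose interior intersects neither `CH(R)` nor `CH(B)`. -/
def SeeEachOther (R B : Finset ℂ) (u v w z : ℂ) : Prop :=
  IsHullEdge (↑R : Set ℂ) u v ∧ IsHullEdge (↑B : Set ℂ) w z ∧
  IsBalancedConvex4Hole R B u v w z ∧
  interior (convexHull ℝ ({u, v, w, z} : Set ℂ)) ∩ convexHull ℝ (↑R : Set ℂ) = ∅ ∧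
  interior (convexHull ℝ ({u, v, w, z} : Set ℂ)) ∩ convexHull ℝ (↑B : Set ℂ) = ∅

/-- Condition C1: some edge of `CH(R)` and some edge of `CH(B)` see each
other. -/
def CondC1 (R B : Finset ℂ) : Prop :=
  ∃ u v w z : ℂ, SeeEachOther R B u v w z

/-- Condition C2: there exist an edge `u v` of `CH(R)` and points `b, z ∈ B`
with `z` in the open triangle `Δ u v b`, no red point in `Δ u v b`, and some
red point in the wedge `W(b,u,v)`; or the same with `R` and `B` swapped. -/
def CondC2 (R B : Finset ℂ) : Prop :=
  (∃ u v : ℂ, IsHullEdge (↑R : Set ℂ) u v ∧ ∃ b ∈ B, ∃ z ∈ B,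
      z ∈ openTriangle u v b ∧ (∀ x ∈ R, x ∉ openTriangle u v b) ∧
      ∃ x ∈ R, (x : ℂ) ∈ wedge b u v) ∨
  (∃ u v : ℂ, IsHullEdge (↑B : Set ℂ) u v ∧ ∃ r ∈ R, ∃ z ∈ R,
      z ∈ openTriangle u v r ∧ (∀ x ∈ B, x ∉ openTriangle u v r) ∧
      ∃ x ∈ B, (x : ℂ) ∈ wedge r u v)

/-- The boundary of the closed polygon with vertices `v 0, …, v (m-1)` in
cyclic order. -/
def PolyBdry (m : ℕ) (v : ℕ → ℂ) : Set ℂ :=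
  ⋃ i ∈ Finset.range m, segment ℝ (v i) (v ((i + 1) % m))

/-- The polygon with vertices `v 0, …, v (m-1)` in cyclic order is simple:
the vertices are distinct, consecutive edges meet exactly at their common
vertex, and non-consecutive edges are disjoint. -/
def IsSimplePoly (m : ℕ) (v : ℕ → ℂ) : Prop :=
  Set.InjOn v {i | i < m} ∧
  ∀ i < m, ∀ j < m, i ≠ j →
    (j = (i + 1) % m →
      segment ℝ (v i) (v ((i + 1) % m)) ∩ segment ℝ (v j) (v ((j + 1) % m)) = {v j}) ∧
    (j ≠ (i + 1) % m → i ≠ (j + 1) % m →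
      segment ℝ (v i) (v ((i + 1) % m)) ∩ segment ℝ (v j) (v ((j + 1) % m)) = ∅)

/-- The interior of a simple polygon: the union of the bounded connected
components of the complement of its boundary. -/
def PolyInterior (m : ℕ) (v : ℕ → ℂ) : Set ℂ :=
  {x | x ∉ PolyBdry m v ∧
    Bornology.IsBounded (connectedComponentIn (PolyBdry m v)ᶜ x)}

/-!
Every point of `S` inside the triangle `r b b'` is red, since a blue one would lie in the wedge
`W(r,b,b')`. For an interior point `z`, pushing a side of the triangle other than `r b` in to `z`
gives a simple quadrilateral with vertices `r, b, z, b'`, two of each colour, which is empty as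
soon as the other interior point (if any) lies in the removed notch. The segments from `z` to the
corners cut the triangle into three notches; if the other point `w` lies in the notch on the side
`r b`, then `z` lies in a notch of `w` on one of the other two sides, and `w` serves instead.
-/

open Set

/-- Twice the signed area of the triangle `a b c`: positive iff `a, b, c` turn counter-clockwise. -/
def orient (a b c : ℂ) : ℝ := (b - a).re * (c - a).im - (b - a).im * (c - a).re

section Orient

variable {a b c : ℂ}

@[simp] lemma orient_self_left (a c : ℂ) : orient a a c = 0 := by simp [orient]
@[simp] lemma orient_self_outer (a b : ℂ) : orient a b a = 0 := by simp [orient]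
@[simp] lemma orient_self_right (a b : ℂ) : orient a b b = 0 := by simp only [orient]; ring

lemma orient_rotate (a b c : ℂ) : orient b c a = orient a b c := by
  simp only [orient, Complex.sub_re, Complex.sub_im]; ring

lemma orient_swap (a b c : ℂ) : orient b a c = -orient a b c := by
  simp only [orient, Complex.sub_re, Complex.sub_im]; ring

lemma orient_swap_right (a b c : ℂ) : orient a c b = -orient a b c := by
  simp only [orient, Complex.sub_re, Complex.sub_im]; ring

lemma orient_smul_add_smul {s t : ℝ} (hst : s + t = 1) (u v x y : ℂ) :
    orient u v (s • x + t • y) = s * orient u v x + t * orient u v y := by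
  obtain rfl : s = 1 - t := by linarith
  simp only [orient, Complex.add_re, Complex.add_im, Complex.real_smul, Complex.mul_re,
    Complex.mul_im, Complex.ofReal_re, Complex.ofReal_im, Complex.sub_re, Complex.sub_im]
  ring

lemma orient_combination {w₀ w₁ w₂ : ℝ} (hw : w₀ + w₁ + w₂ = 1) (u v a b c : ℂ) :
    orient u v (w₀ • a + w₁ • b + w₂ • c) =
      w₀ * orient u v a + w₁ * orient u v b + w₂ * orient u v c := by
  obtain rfl : w₀ = 1 - w₁ - w₂ := by linarith
  simp only [orient, Complex.add_re, Complex.add_im, Complex.real_smul, Complex.mul_re,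
    Complex.mul_im, Complex.ofReal_re, Complex.ofReal_im, Complex.sub_re, Complex.sub_im]
  ring

lemma orient_add_smul_sub (u v x y z : ℂ) (t : ℝ) :
    orient u v (x + t • (y - z)) = orient u v x + t * (orient u v y - orient u v z) := by
  simp only [orient, Complex.add_re, Complex.add_im, Complex.real_smul, Complex.mul_re,
    Complex.mul_im, Complex.ofReal_re, Complex.ofReal_im, Complex.sub_re, Complex.sub_im]
  ring

lemma ne_of_orient_ne_zero (h : orient a b c ≠ 0) : a ≠ b ∧ b ≠ c ∧ c ≠ a := by
  refine ⟨?_, ?_, ?_⟩ <;> rintro rfl <;> simp at h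

lemma convex_orient_preimage (u v : ℂ) {s : Set ℝ} (hs : Convex ℝ s) :
    Convex ℝ {y | orient u v y ∈ s} := by
  intro x hx y hy p q hp hq hpq
  simp only [mem_ofPred_eq, orient_smul_add_smul hpq]
  exact hs hx hy hp hq hpq

end Orient

section Triangle

variable {a b c x : ℂ}

lemma exists_barycentric (h : ¬ Collinear ℝ ({a, b, c} : Set ℂ)) (x : ℂ) :
    ∃ w₀ w₁ w₂ : ℝ, w₀ + w₁ + w₂ = 1 ∧ x = w₀ • a + w₁ • b + w₂ • c ∧
      (x ∈ openTriangle a b c ↔ 0 < w₀ ∧ 0 < w₁ ∧ 0 < w₂) := by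
  have hind : AffineIndependent ℝ ![a, b, c] := affineIndependent_iff_not_collinear_set.2 h
  have hrange : range ![a, b, c] = ({a, b, c} : Set ℂ) := by
    ext y
    simp only [Matrix.range_cons, Matrix.range_empty, union_empty, mem_union, mem_singleton_iff,
      mem_insert_iff]
  let T : AffineBasis (Fin 3) ℝ ℂ := ⟨![a, b, c], hind, by
    rw [hind.affineSpan_eq_top_iff_card_eq_finrank_add_one]
    simp [Complex.finrank_real_complex]⟩
  have hT : openTriangle a b c = {x | ∀ i, 0 < T.coord i x} := by
    rw [openTriangle, ← hrange, ← T.interior_convexHull]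
    rfl
  refine ⟨T.coord 0 x, T.coord 1 x, T.coord 2 x, ?_, ?_, ?_⟩
  · rw [← T.sum_coord_apply_eq_one x, Fin.sum_univ_three]
  · have := T.linear_combination_coord_eq_self x
    rw [Fin.sum_univ_three] at this
    exact this.symm
  · simp [hT, Fin.forall_fin_succ]

lemma orient_ne_zero_of_not_collinear (h : ¬ Collinear ℝ ({a, b, c} : Set ℂ)) :
    orient a b c ≠ 0 := by
  intro h0
  have hab : a ≠ b := by
    rintro rfl
    exact h (by simpa using collinear_pair ℝ a c)
  obtain ⟨w₀, w₁, w₂, hw, hx, -⟩ := exists_barycentric h (a + Complex.I * (b - a))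
  have key := congrArg (orient a b) hx
  have : orient a b (a + Complex.I * (b - a)) = Complex.normSq (b - a) := by
    simp only [orient, Complex.normSq_apply, add_sub_cancel_left, Complex.mul_re, Complex.mul_im,
      Complex.I_re, Complex.I_im]
    ring
  rw [orient_combination hw, h0, this] at key
  simp only [orient_self_outer, orient_self_right, mul_zero, add_zero] at key
  exact hab (sub_eq_zero.1 (Complex.normSq_eq_zero.1 key)).symm

lemma orient_eq_zero_of_collinear (h : Collinear ℝ ({a, b, c} : Set ℂ)) : orient a b c = 0 := by
  obtain ⟨v, hv⟩ := (collinear_iff_of_mem (mem_insert a {b, c})).1 h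
  obtain ⟨s, rfl⟩ := hv b (by simp)
  obtain ⟨t, rfl⟩ := hv c (by simp)
  simp only [orient, vadd_eq_add, add_sub_cancel_right, Complex.real_smul, Complex.mul_re,
    Complex.mul_im, Complex.ofReal_re, Complex.ofReal_im]
  ring

lemma collinear_iff_orient_eq_zero : Collinear ℝ ({a, b, c} : Set ℂ) ↔ orient a b c = 0 :=
  ⟨orient_eq_zero_of_collinear, not_imp_not.1 orient_ne_zero_of_not_collinear⟩

lemma mem_openTriangle_iff (h : 0 < orient a b c) :
    x ∈ openTriangle a b c ↔ 0 < orient a b x ∧ 0 < orient b c x ∧ 0 < orient c a x := by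
  have hnc : ¬ Collinear ℝ ({a, b, c} : Set ℂ) := collinear_iff_orient_eq_zero.not.2 h.ne'
  obtain ⟨w₀, w₁, w₂, hw, rfl, hmem⟩ := exists_barycentric hnc x
  rw [hmem]
  simp only [orient_combination hw, orient_self_outer, orient_self_right, orient_rotate a b c,
    ← orient_rotate c a b, mul_zero, zero_add, add_zero, mul_pos_iff_of_pos_right h]
  tauto

lemma openTriangle_rotate (a b c : ℂ) : openTriangle b c a = openTriangle a b c := by
  rw [openTriangle, openTriangle, pair_comm c a, insert_comm b a]

lemma openTriangle_swap (a b c : ℂ) : openTriangle b a c = openTriangle a b c := by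
  rw [openTriangle, openTriangle, insert_comm b a]

lemma openTriangle_subset_wedge (h : ¬ Collinear ℝ ({a, b, c} : Set ℂ)) :
    openTriangle a b c ⊆ wedge a b c := by
  intro x hx
  obtain ⟨w₀, w₁, w₂, hw, rfl, hmem⟩ := exists_barycentric h x
  obtain ⟨-, h₁, h₂⟩ := hmem.1 hx
  refine ⟨w₁, w₂, h₁, h₂, ?_⟩
  obtain rfl : w₀ = 1 - w₁ - w₂ := by linarith
  module

end Triangle

section Segments

variable {a b c z p q s t u v : ℂ}

lemma segment_inter_segment_eq_singleton (h : orient a b c ≠ 0) :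
    segment ℝ a b ∩ segment ℝ b c = {b} := by
  refine subset_antisymm ?_ (singleton_subset_iff.2
    ⟨right_mem_segment ℝ a b, left_mem_segment ℝ b c⟩)
  rintro y ⟨hy₁, hy₂⟩
  rw [segment_eq_image] at hy₂
  obtain ⟨t, -, rfl⟩ := hy₂
  have hline : orient a b ((1 - t) • b + t • c) = 0 :=
    (convex_orient_preimage a b (convex_singleton 0)).segment_subset (by simp) (by simp) hy₁
  rw [orient_smul_add_smul (by ring), orient_self_right, mul_zero, zero_add] at hline
  obtain rfl : t = 0 := (mul_eq_zero.1 hline).resolve_right h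
  simp

lemma segment_inter_segment_eq_empty (hp : orient u v p ≤ 0) (hq : orient u v q ≤ 0)
    (hs : 0 < orient u v s) (ht : 0 < orient u v t) :
    segment ℝ p q ∩ segment ℝ s t = ∅ := by
  refine eq_empty_iff_forall_notMem.2 fun y ⟨hy₁, hy₂⟩ => ?_
  have h₁ : orient u v y ≤ 0 :=
    (convex_orient_preimage u v (convex_Iic 0)).segment_subset hp hq hy₁
  have h₂ : 0 < orient u v y :=
    (convex_orient_preimage u v (convex_Ioi 0)).segment_subset hs ht hy₂
  exact h₁.not_gt h₂

lemma isSimpleQuad_notch (habc : 0 < orient a b c) (hz : z ∈ openTriangle a b c) :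
    IsSimpleQuad a b z c := by
  obtain ⟨h₁, h₂, h₃⟩ := (mem_openTriangle_iff habc).1 hz
  obtain ⟨hab, hbc, hca⟩ := ne_of_orient_ne_zero habc.ne'
  obtain ⟨-, hbz, hza⟩ := ne_of_orient_ne_zero h₁.ne'
  obtain ⟨-, hcz, -⟩ := ne_of_orient_ne_zero h₂.ne'
  refine ⟨?_, segment_inter_segment_eq_singleton h₁.ne', segment_inter_segment_eq_singleton ?_,
    segment_inter_segment_eq_singleton ?_, segment_inter_segment_eq_singleton ?_,
    segment_inter_segment_eq_empty (by simp) (by simp) h₁ habc, ?_⟩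
  · simp [hab, hbz, hza.symm, hca.symm, hbc, hcz.symm]
  · rw [orient_swap, ← orient_rotate]; linarith
  · rw [← orient_rotate]; exact h₃.ne'
  · rw [← orient_rotate]; exact habc.ne'
  · rw [inter_comm]
    refine segment_inter_segment_eq_empty (by simp) (by simp) ?_ h₃
    rw [← orient_rotate]; exact habc

end Segments

lemma not_isBounded_ray (x v : ℂ) (hv : v ≠ 0) :
    ¬ Bornology.IsBounded ((fun t : ℝ => x + t • v) '' Ici 0) := by
  rintro hbdd
  obtain ⟨C, hC⟩ := isBounded_iff_forall_norm_le.1 hbdd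
  have hv' : 0 < ‖v‖ := norm_pos_iff.2 hv
  set t := (|C| + ‖x‖ + 1) / ‖v‖
  have ht : 0 ≤ t := by positivity
  have hlen : ‖t • v‖ = |C| + ‖x‖ + 1 := by
    rw [norm_smul, Real.norm_of_nonneg ht, div_mul_cancel₀ _ hv'.ne']
  have htri : ‖t • v‖ ≤ ‖x + t • v‖ + ‖x‖ := by
    simpa using norm_sub_le (x + t • v) x
  linarith [hC _ ⟨t, ht, rfl⟩, le_abs_self C]

section QuadInterior

variable {a b c d x : ℂ}

lemma notMem_quadInterior_of_ray {v : ℂ} (hv : v ≠ 0)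
    (hray : ∀ t : ℝ, 0 < t → x + t • v ∉ QuadBdry a b c d) : x ∉ QuadInterior a b c d := by
  rintro ⟨hx, hbdd⟩
  refine not_isBounded_ray x v hv (hbdd.subset ?_)
  refine (isPreconnected_Ici.image _ (by fun_prop : Continuous fun t : ℝ => x + t • v).continuousOn)
    |>.subset_connectedComponentIn ⟨0, self_mem_Ici, by simp⟩ ?_
  rintro _ ⟨t, ht, rfl⟩
  rcases (show (0 : ℝ) ≤ t from ht).eq_or_lt with rfl | ht
  · simpa using hx
  · exact hray t ht

lemma quadBdry_subset_of_convex {C : Set ℂ} (hC : Convex ℝ C)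
    (ha : a ∈ C) (hb : b ∈ C) (hc : c ∈ C) (hd : d ∈ C) : QuadBdry a b c d ⊆ C :=
  union_subset (union_subset (union_subset (hC.segment_subset ha hb) (hC.segment_subset hb hc))
    (hC.segment_subset hc hd)) (hC.segment_subset hd ha)

lemma notMem_quadInterior_of_orient_nonpos {u v w : ℂ} (hw : 0 < orient u v w)
    (hx : orient u v x ≤ 0) (ha : 0 ≤ orient u v a) (hb : 0 ≤ orient u v b)
    (hc : 0 ≤ orient u v c) (hd : 0 ≤ orient u v d) : x ∉ QuadInterior a b c d := by
  have huw : u - w ≠ 0 := by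
    rintro h
    rw [sub_eq_zero.1 h, orient_self_outer] at hw
    exact hw.false
  refine notMem_quadInterior_of_ray huw fun t ht hy => ?_
  have := quadBdry_subset_of_convex (convex_orient_preimage u v (convex_Ici 0)) ha hb hc hd hy
  simp only [mem_ofPred_eq, mem_Ici, orient_add_smul_sub, orient_self_outer] at this
  nlinarith

/-- Points in the notch `b z c` escape along the ray from `z` through them. -/
lemma notMem_quadInterior_notch {z : ℂ} (hz₁ : 0 < orient a b z) (hz₃ : 0 < orient c a z)
    (hx₁ : 0 < orient z b x) (hx₂ : orient z c x < 0) : x ∉ QuadInterior a b z c := by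
  have hxz : x - z ≠ 0 := by
    rintro h
    rw [sub_eq_zero.1 h, orient_self_outer] at hx₁
    exact hx₁.false
  have hleft : ∀ y ∈ segment ℝ a b ∪ segment ℝ b z, orient z b y ≤ 0 := by
    have hC := convex_orient_preimage z b (convex_Iic 0)
    have ha : orient z b a ≤ 0 := by rw [← orient_rotate, orient_swap]; linarith
    exact union_subset (hC.segment_subset ha (by simp)) (hC.segment_subset (by simp) (by simp))
  have hright : ∀ y ∈ segment ℝ z c ∪ segment ℝ c a, 0 ≤ orient z c y := by
    have hC := convex_orient_preimage z c (convex_Ici 0)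
    have ha : 0 ≤ orient z c a := by rw [← orient_rotate]; exact hz₃.le
    exact union_subset (hC.segment_subset (by simp) (by simp)) (hC.segment_subset (by simp) ha)
  refine notMem_quadInterior_of_ray hxz fun t ht hy => ?_
  have h₁ := orient_add_smul_sub z b x x z t
  have h₂ := orient_add_smul_sub z c x x z t
  simp only [orient_self_outer] at h₁ h₂
  rcases hy with (hy | hy) | hy
  · nlinarith [hleft _ hy]
  · nlinarith [hright _ (Or.inl hy)]
  · nlinarith [hright _ (Or.inr hy)]

end QuadInterior

def IsEmptyQuad (S : Set ℂ) (a b c d : ℂ) : Prop :=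
  IsSimpleQuad a b c d ∧ ∀ x ∈ S, x ∉ QuadInterior a b c d

section EmptyQuad

variable {S : Set ℂ} {a b c d z : ℂ}

lemma quadBdry_rotate (a b c d : ℂ) : QuadBdry b c d a = QuadBdry a b c d := by
  ext x
  simp only [QuadBdry, mem_union]
  tauto

lemma quadBdry_reverse (a b c d : ℂ) : QuadBdry d c b a = QuadBdry a b c d := by
  ext x
  simp only [QuadBdry, mem_union, segment_symm ℝ d c, segment_symm ℝ c b, segment_symm ℝ b a,
    segment_symm ℝ a d]
  tauto

lemma IsSimpleQuad.rotate (h : IsSimpleQuad a b c d) : IsSimpleQuad b c d a := by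
  obtain ⟨hpw, e₁, e₂, e₃, e₄, e₅, e₆⟩ := h
  exact ⟨hpw.perm (List.rotate_perm [a, b, c, d] 1).symm Ne.symm, e₂, e₃, e₄, e₁, e₆,
    by rw [inter_comm, e₅]⟩

lemma IsSimpleQuad.reverse (h : IsSimpleQuad a b c d) : IsSimpleQuad d c b a := by
  obtain ⟨hpw, e₁, e₂, e₃, e₄, e₅, e₆⟩ := h
  simp only [IsSimpleQuad, segment_symm ℝ d c, segment_symm ℝ c b, segment_symm ℝ b a,
    segment_symm ℝ a d]
  exact ⟨hpw.perm (List.reverse_perm [a, b, c, d]).symm Ne.symm, by rw [inter_comm, e₂],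
    by rw [inter_comm, e₁], by rw [inter_comm, e₄], by rw [inter_comm, e₃], by rw [inter_comm, e₅],
    e₆⟩

lemma IsEmptyQuad.rotate (h : IsEmptyQuad S a b c d) : IsEmptyQuad S b c d a :=
  ⟨h.1.rotate, by simpa only [QuadInterior, quadBdry_rotate] using h.2⟩

lemma IsEmptyQuad.reverse (h : IsEmptyQuad S a b c d) : IsEmptyQuad S d c b a :=
  ⟨h.1.reverse, by simpa only [QuadInterior, quadBdry_reverse] using h.2⟩

lemma isEmptyQuad_notch (habc : 0 < orient a b c) (hz : z ∈ openTriangle a b c)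
    (hS : ∀ x ∈ S, x ∈ openTriangle a b c → x = z ∨ x ∈ openTriangle b c z) :
    IsEmptyQuad S a b z c := by
  obtain ⟨h₁, h₂, h₃⟩ := (mem_openTriangle_iff habc).1 hz
  have hbca : 0 < orient b c a := by rwa [orient_rotate]
  have hcab : 0 < orient c a b := by rwa [← orient_rotate]
  refine ⟨isSimpleQuad_notch habc hz, fun x hx => ?_⟩
  by_cases hxT : x ∈ openTriangle a b c
  · rcases hS x hx hxT with rfl | hxn
    · exact fun h => h.1 (Or.inl (Or.inl (Or.inr (right_mem_segment ℝ b x))))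
    · obtain ⟨-, hc, hb⟩ := (mem_openTriangle_iff h₂).1 hxn
      rw [orient_swap] at hc
      exact notMem_quadInterior_notch h₁ h₃ hb (neg_pos.1 hc)
  · simp only [mem_openTriangle_iff habc, not_and_or, not_lt] at hxT
    rcases hxT with hx | hx | hx
    · exact notMem_quadInterior_of_orient_nonpos habc hx (by simp) (by simp) h₁.le habc.le
    · exact notMem_quadInterior_of_orient_nonpos hbca hx hbca.le (by simp) h₂.le (by simp)
    · exact notMem_quadInterior_of_orient_nonpos hcab hx (by simp) hcab.le h₃.le (by simp)

end EmptyQuad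

section Notch

variable {S : Set ℂ} {a b c u v w x z : ℂ}

lemma GenPos.orient_ne_zero (hS : GenPos S) (ha : a ∈ S) (hb : b ∈ S) (hc : c ∈ S)
    (hab : a ≠ b) (hbc : b ≠ c) (hca : c ≠ a) : orient a b c ≠ 0 :=
  fun h => hS a ha b hb c hc hab hca.symm hbc (collinear_iff_orient_eq_zero.2 h)

lemma ne_of_mem_openTriangle (habc : 0 < orient a b c) (hx : x ∈ openTriangle a b c) :
    x ≠ a ∧ x ≠ b ∧ x ≠ c := by
  obtain ⟨h₁, h₂, -⟩ := (mem_openTriangle_iff habc).1 hx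
  obtain ⟨-, hbx, hxa⟩ := ne_of_orient_ne_zero h₁.ne'
  obtain ⟨-, hcx, -⟩ := ne_of_orient_ne_zero h₂.ne'
  exact ⟨hxa, hbx.symm, hcx.symm⟩

/-- The barycentric coordinates of `z` weight the sides of `w` with respect to the lines `z a`,
`z b`, `z c` to zero, so `w` cannot lie strictly on the same side of all three. -/
lemma orient_barycentric_identity (a b c z w : ℂ) :
    orient b c z * orient z a w + orient c a z * orient z b w + orient a b z * orient z c w = 0 := by
  simp only [orient, Complex.sub_re, Complex.sub_im]; ring

lemma mem_openTriangle_trichotomy (habc : 0 < orient a b c) (hz : z ∈ openTriangle a b c)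
    (hw : w ∈ openTriangle a b c) (ha : orient z a w ≠ 0) (hb : orient z b w ≠ 0)
    (hc : orient z c w ≠ 0) :
    w ∈ openTriangle b c z ∨ w ∈ openTriangle c a z ∨ w ∈ openTriangle a b z := by
  obtain ⟨h₁, h₂, h₃⟩ := (mem_openTriangle_iff habc).1 hz
  obtain ⟨k₁, k₂, k₃⟩ := (mem_openTriangle_iff habc).1 hw
  have key := orient_barycentric_identity a b c z w
  rw [mem_openTriangle_iff h₂, mem_openTriangle_iff h₃, mem_openTriangle_iff h₁,
    orient_swap z c w, orient_swap z a w, orient_swap z b w]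
  rcases ha.lt_or_gt with sa | sa <;> rcases hb.lt_or_gt with sb | sb <;>
    rcases hc.lt_or_gt with sc | sc
  all_goals first
    | exact Or.inl ⟨k₂, neg_pos.2 sc, sb⟩
    | exact Or.inr (Or.inl ⟨k₃, neg_pos.2 sa, sc⟩)
    | exact Or.inr (Or.inr ⟨k₁, neg_pos.2 sb, sa⟩)
    | nlinarith

lemma exists_isEmptyQuad_notch (hS : GenPos S) (ha : a ∈ S) (hb : b ∈ S) (hc : c ∈ S)
    (habc : 0 < orient a b c) (h₁ : 1 ≤ (S ∩ openTriangle a b c).ncard)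
    (h₂ : (S ∩ openTriangle a b c).ncard ≤ 2) :
    ∃ z ∈ S ∩ openTriangle a b c, IsEmptyQuad S a b z c ∨ IsEmptyQuad S b c z a := by
  set P := S ∩ openTriangle a b c
  suffices ∃ z ∈ P, (∀ x ∈ P, x = z ∨ x ∈ openTriangle b c z) ∨
      (∀ x ∈ P, x = z ∨ x ∈ openTriangle c a z) by
    obtain ⟨z, hz, hnotch | hnotch⟩ := this
    · exact ⟨z, hz, Or.inl (isEmptyQuad_notch habc hz.2 fun x hx hxT => hnotch x ⟨hx, hxT⟩)⟩
    · refine ⟨z, hz, Or.inr (isEmptyQuad_notch (by rwa [orient_rotate])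
        (by rw [openTriangle_rotate]; exact hz.2) fun x hx hxT => hnotch x ⟨hx, ?_⟩)⟩
      rwa [openTriangle_rotate] at hxT
  have htri : ∀ z ∈ P, ∀ w ∈ P, z ≠ w →
      w ∈ openTriangle b c z ∨ w ∈ openTriangle c a z ∨ w ∈ openTriangle a b z := by
    rintro z ⟨hzS, hz⟩ w ⟨hwS, hw⟩ hzw
    obtain ⟨hza, hzb, hzc⟩ := ne_of_mem_openTriangle habc hz
    obtain ⟨hwa, hwb, hwc⟩ := ne_of_mem_openTriangle habc hw
    exact mem_openTriangle_trichotomy habc hz hw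
      (hS.orient_ne_zero hzS ha hwS hza hwa.symm hzw.symm)
      (hS.orient_ne_zero hzS hb hwS hzb hwb.symm hzw.symm)
      (hS.orient_ne_zero hzS hc hwS hzc hwc.symm hzw.symm)
  have hpick : ∀ z w, P = {z, w} → w ∈ openTriangle b c z ∨ w ∈ openTriangle c a z →
      ∃ z ∈ P, (∀ x ∈ P, x = z ∨ x ∈ openTriangle b c z) ∨
        (∀ x ∈ P, x = z ∨ x ∈ openTriangle c a z) := by
    rintro z w hP hw
    refine ⟨z, hP ▸ mem_insert z {w}, ?_⟩
    simp only [hP, mem_insert_iff, mem_singleton_iff, forall_eq_or_imp, forall_eq, true_or,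
      true_and]
    tauto
  obtain hP | hP : P.ncard = 1 ∨ P.ncard = 2 := by omega
  · obtain ⟨z, hPz⟩ := ncard_eq_one.1 hP
    refine ⟨z, hPz ▸ rfl, Or.inl fun x hx => Or.inl ?_⟩
    rwa [hPz, mem_singleton_iff] at hx
  obtain ⟨p, q, hpq, hPpq⟩ := ncard_eq_two.1 hP
  have hp : p ∈ P := hPpq ▸ mem_insert p {q}
  have hq : q ∈ P := hPpq ▸ mem_insert_of_mem p rfl
  rcases htri p hp q hq hpq with h | h | hqp
  · exact hpick p q hPpq (Or.inl h)
  · exact hpick p q hPpq (Or.inr h)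
  rcases htri q hq p hp hpq.symm with h | h | hpq'
  · exact hpick q p (hPpq.trans (pair_comm p q)) (Or.inl h)
  · exact hpick q p (hPpq.trans (pair_comm p q)) (Or.inr h)
  -- Otherwise each of `p`, `q` lies in the notch `a b ·` of the other: impossible, as then each
  -- lies strictly to the left of the line through `b` and the other one.
  have hbpq := ((mem_openTriangle_iff ((mem_openTriangle_iff habc).1 hp.2).1).1 hqp).2.1
  have hbqp := ((mem_openTriangle_iff ((mem_openTriangle_iff habc).1 hq.2).1).1 hpq').2.1
  rw [orient_swap_right] at hbqp
  linarith

lemma exists_isEmptyQuad_of_not_collinear (hS : GenPos S)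
    (hu : u ∈ S) (hv : v ∈ S) (hw : w ∈ S) (h : ¬ Collinear ℝ ({u, v, w} : Set ℂ))
    (h₁ : 1 ≤ (S ∩ openTriangle u v w).ncard) (h₂ : (S ∩ openTriangle u v w).ncard ≤ 2) :
    ∃ z ∈ S ∩ openTriangle u v w, ∃ c d, IsEmptyQuad S u v c d ∧ ({c, d} : Set ℂ) = {z, w} := by
  rcases (orient_ne_zero_of_not_collinear h).lt_or_gt with hneg | hpos
  · have hvuw : 0 < orient v u w := by rw [orient_swap]; linarith
    rw [← openTriangle_swap] at h₁ h₂ ⊢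
    obtain ⟨z, hz, hq | hq⟩ := exists_isEmptyQuad_notch hS hv hu hw hvuw h₁ h₂
    · exact ⟨z, hz, w, z, hq.reverse.rotate.rotate, pair_comm w z⟩
    · exact ⟨z, hz, z, w, hq.reverse.rotate.rotate.rotate, rfl⟩
  · obtain ⟨z, hz, hq | hq⟩ := exists_isEmptyQuad_notch hS hu hv hw hpos h₁ h₂
    · exact ⟨z, hz, z, w, hq, rfl⟩
    · exact ⟨z, hz, w, z, hq.rotate.rotate.rotate, pair_comm w z⟩

end Notch

lemma IsEmptyQuad.isBalanced4Hole {R B : Finset ℂ} {r b c d z b' : ℂ} (hdisj : Disjoint R B)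
    (h : IsEmptyQuad (↑R ∪ ↑B) r b c d) (hcd : ({c, d} : Set ℂ) = {z, b'})
    (hr : r ∈ R) (hz : z ∈ R) (hb : b ∈ B) (hb' : b' ∈ B) : IsBalanced4Hole R B r b c d := by
  have hne : ∀ y ∈ ({c, d} : Set ℂ), r ≠ y ∧ b ≠ y := by
    have := h.1.1
    simp only [List.pairwise_cons, List.mem_cons, List.not_mem_nil, or_false, forall_eq_or_imp,
      forall_eq] at this
    rintro y (rfl | rfl) <;> tauto
  have hrz := (hne z (hcd ▸ mem_insert z {b'})).1
  have hbb' := (hne b' (hcd ▸ mem_insert_of_mem z rfl)).2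
  have hbR : b ∉ R := Finset.disjoint_right.1 hdisj hb
  have hb'R : b' ∉ R := Finset.disjoint_right.1 hdisj hb'
  have hrB : r ∉ B := Finset.disjoint_left.1 hdisj hr
  have hzB : z ∉ B := Finset.disjoint_left.1 hdisj hz
  have hred : ({r, b, z, b'} : Set ℂ) ∩ ↑R = {r, z} := by
    ext x
    simp only [mem_inter_iff, mem_insert_iff, mem_singleton_iff, Finset.mem_coe]
    constructor
    · rintro ⟨rfl | rfl | rfl | rfl, hx⟩ <;> tauto
    · rintro (rfl | rfl) <;> tauto
  have hblue : ({r, b, z, b'} : Set ℂ) ∩ ↑B = {b, b'} := by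
    ext x
    simp only [mem_inter_iff, mem_insert_iff, mem_singleton_iff, Finset.mem_coe]
    constructor
    · rintro ⟨rfl | rfl | rfl | rfl, hx⟩ <;> tauto
    · rintro (rfl | rfl) <;> tauto
  refine ⟨h.1, ?_, ?_, ?_, h.2⟩ <;> rw [hcd]
  · simp [insert_subset_iff, hr, hz, hb, hb']
  · rw [hred, ncard_pair hrz]
  · rw [hblue, ncard_pair hbb']

theorem stmt18_general (R B : Finset ℂ) (hdisj : Disjoint R B)
    (hgp : GenPos (↑R ∪ ↑B : Set ℂ))
    (r b b' : ℂ) (hr : r ∈ R) (hb : b ∈ B) (hb' : b' ∈ B)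
    (hangle : ¬ Collinear ℝ ({r, b, b'} : Set ℂ))
    (hconsec : ∀ x ∈ B, (x : ℂ) ∉ wedge r b b')
    (htri1 : 1 ≤ ((↑R : Set ℂ) ∩ openTriangle r b b').ncard)
    (htri2 : ((↑R : Set ℂ) ∩ openTriangle r b b').ncard ≤ 2) :
    ∃ c d : ℂ, IsBalanced4Hole R B r b c d := by
  have hred : (↑R ∪ ↑B : Set ℂ) ∩ openTriangle r b b' = ↑R ∩ openTriangle r b b' := by
    rw [union_inter_distrib_right, union_eq_left]
    exact fun x ⟨hxB, hxT⟩ => absurd (openTriangle_subset_wedge hangle hxT) (hconsec x hxB)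
  obtain ⟨z, hz, c, d, hquad, hcd⟩ := exists_isEmptyQuad_of_not_collinear hgp
    (Or.inl hr) (Or.inr hb) (Or.inr hb') hangle (hred ▸ htri1) (hred ▸ htri2)
  rw [hred] at hz
  exact ⟨c, d, hquad.isBalanced4Hole hdisj hcd hr hz.1 hb hb'⟩

/-- if `r ∈ R`, `b, b' ∈ B` are consecutive in the radial order
around `r` (no blue point lies in `W(r,b,b')`), the wedge `W(r,b,b')` spans an
angle less than `π` (i.e. `r, b, b'` are not collinear), and the open triangle
`Δ r b b'` contains at least one and at most two red points, then `S` has a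
balanced 4-hole having the segment `r b` as an edge. -/
theorem stmt18 (R B : Finset ℂ) (hdisj : Disjoint R B)
    (hgp : GenPos (↑R ∪ ↑B : Set ℂ))
    (r b b' : ℂ) (hr : r ∈ R) (hb : b ∈ B) (hb' : b' ∈ B) (hbb' : b ≠ b')
    (hangle : ¬ Collinear ℝ ({r, b, b'} : Set ℂ))
    (hconsec : ∀ x ∈ B, (x : ℂ) ∉ wedge r b b')
    (htri1 : 1 ≤ ((↑R : Set ℂ) ∩ openTriangle r b b').ncard)
    (htri2 : ((↑R : Set ℂ) ∩ openTriangle r b b').ncard ≤ 2) :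
    ∃ c d : ℂ, IsBalanced4Hole R B r b c d :=
  stmt18_general R B hdisj hgp r b b' hr hb hb' hangle hconsec htri1 htri2
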